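/- arXiv:2303.12357 — 3 statements merged into one kernel-verified Lean document; each statement's English description precedes it below -/
import Mathlib

section
/- For two discrete probability distributions u, v on {1,...,n}, the 1-Wasserstein distance (with ground metric |i-j|) equals the sum over i from 1 to n of the absolute difference of the partial sums: d_W(u,v) = Σ_{i=1}^n |Σ_{j=1}^i u_j − Σ_{j=1}^i v_j|. -/
/-!
The distance `|i - j|` is the number of cuts `k | k + 1` separating `i` and `j`, so the cost of a
coupling is the total mass it moves across all cuts. Across the cut after `k` at least the net
mass `|F_u(k) - F_v(k)|` must move, which gives the lower bound. It is attained by the comonotone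
coupling, which lays `u` and `v` out as consecutive intervals of `[0, 1]` (`u i` occupying
`[F_u(i - 1), F_u(i)]`) and couples `i` with `j` by the length of the overlap of their intervals:
its support is monotone, so it never moves mass across a cut in both directions.
-/

open Finset

structure IsCoupling {ι κ : Type*} [Fintype ι] [Fintype κ]
    (u : ι → ℝ) (v : κ → ℝ) (γ : ι → κ → ℝ) : Prop where
  nonneg : ∀ i j, 0 ≤ γ i j
  sum_row : ∀ i, ∑ j, γ i j = u i
  sum_col : ∀ j, ∑ i, γ i j = v j

lemma IsCoupling.sum_sub_mul {ι κ : Type*} [Fintype ι] [Fintype κ] {u : ι → ℝ} {v : κ → ℝ}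
    {γ : ι → κ → ℝ} (hγ : IsCoupling u v γ) (a : ι → ℝ) (b : κ → ℝ) :
    ∑ i, ∑ j, (a i - b j) * γ i j = ∑ i, a i * u i - ∑ j, b j * v j := by
  simp only [sub_mul, sum_sub_distrib, ← mul_sum, hγ.sum_row]
  rw [sum_comm]
  simp only [← mul_sum, hγ.sum_col]

lemma sum_sum_abs_eq_abs_sum_sum {ι κ : Type*} [Fintype ι] [Fintype κ] {f : ι → κ → ℝ}
    (h : (∀ i j, 0 ≤ f i j) ∨ (∀ i j, f i j ≤ 0)) :
    ∑ i, ∑ j, |f i j| = |∑ i, ∑ j, f i j| := by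
  rcases h with h | h
  · simp only [abs_of_nonneg (h _ _),
      abs_of_nonneg (sum_nonneg fun i _ => sum_nonneg fun j _ => h i j)]
  · simp only [abs_of_nonpos (h _ _),
      abs_of_nonpos (sum_nonpos fun i _ => sum_nonpos fun j _ => h i j), sum_neg_distrib]

def HasMonotoneSupport {ι κ : Type*} [LinearOrder ι] [LinearOrder κ] (γ : ι → κ → ℝ) : Prop :=
  ∀ ⦃i i' j j'⦄, 0 < γ i j → 0 < γ i' j' → i < i' → j ≤ j'

section Crossing

variable {n : ℕ}

def crossing (k i j : Fin n) : ℝ := (if i ≤ k then 1 else 0) - (if j ≤ k then 1 else 0)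

lemma crossing_pos_iff {k i j : Fin n} : 0 < crossing k i j ↔ i ≤ k ∧ k < j := by
  unfold crossing
  split_ifs <;> grind

lemma crossing_neg_iff {k i j : Fin n} : crossing k i j < 0 ↔ j ≤ k ∧ k < i := by
  unfold crossing
  split_ifs <;> grind

lemma crossing_nonneg_of_le {i j : Fin n} (h : i ≤ j) (k : Fin n) : 0 ≤ crossing k i j :=
  not_lt.mp fun hneg => (crossing_neg_iff.mp hneg).elim fun hjk hki => (h.trans hjk).not_gt hki

lemma abs_crossing_comm (k i j : Fin n) : |crossing k j i| = |crossing k i j| := by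
  rw [crossing, crossing, abs_sub_comm]

lemma sum_crossing (i j : Fin n) : ∑ k, crossing k i j = (j : ℝ) - i := by
  simp only [crossing, sum_sub_distrib, sum_boole, filter_le_eq_Ici, Fin.card_Ici]
  rw [Nat.cast_sub i.isLt.le, Nat.cast_sub j.isLt.le]
  ring

lemma abs_sub_eq_sum_abs_crossing (i j : Fin n) : |(i : ℝ) - j| = ∑ k, |crossing k i j| := by
  wlog h : i ≤ j generalizing i j
  · simpa only [abs_sub_comm, abs_crossing_comm] using this j i (le_of_not_ge h)
  rw [abs_sub_comm, abs_of_nonneg (by simpa using h), ← sum_crossing]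
  exact sum_congr rfl fun k _ => (abs_of_nonneg (crossing_nonneg_of_le h k)).symm

lemma sum_abs_sub_mul_eq_sum_crossing (γ : Fin n → Fin n → ℝ) :
    ∑ i : Fin n, ∑ j : Fin n, |(i : ℝ) - (j : ℝ)| * γ i j =
      ∑ k, ∑ i, ∑ j, |crossing k i j| * γ i j := by
  simp only [abs_sub_eq_sum_abs_crossing, sum_mul]
  conv_lhs => enter [2, i]; rw [sum_comm]
  exact sum_comm

end Crossing

namespace IsCoupling

variable {n : ℕ} {u v : Fin n → ℝ} {γ : Fin n → Fin n → ℝ}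

lemma sum_crossing_mul (hγ : IsCoupling u v γ) (k : Fin n) :
    ∑ i, ∑ j, crossing k i j * γ i j = ∑ i ∈ Iic k, u i - ∑ i ∈ Iic k, v i := by
  simp only [crossing, hγ.sum_sub_mul, ite_mul, one_mul, zero_mul, sum_ite, sum_const_zero,
    add_zero, filter_ge_eq_Iic]

lemma abs_sum_Iic_sub_le (hγ : IsCoupling u v γ) (k : Fin n) :
    |∑ i ∈ Iic k, u i - ∑ i ∈ Iic k, v i| ≤ ∑ i, ∑ j, |crossing k i j| * γ i j := by
  rw [← hγ.sum_crossing_mul]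
  calc |∑ i, ∑ j, crossing k i j * γ i j| ≤ ∑ i, |∑ j, crossing k i j * γ i j| :=
        abs_sum_le_sum_abs _ _
    _ ≤ ∑ i, ∑ j, |crossing k i j * γ i j| := sum_le_sum fun i _ => abs_sum_le_sum_abs _ _
    _ = ∑ i, ∑ j, |crossing k i j| * γ i j := by
        simp only [abs_mul, abs_of_nonneg (hγ.nonneg _ _)]

lemma abs_sum_Iic_sub_eq (hγ : IsCoupling u v γ) (hmono : HasMonotoneSupport γ) (k : Fin n) :
    |∑ i ∈ Iic k, u i - ∑ i ∈ Iic k, v i| = ∑ i, ∑ j, |crossing k i j| * γ i j := by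
  have habs : ∀ i j, |crossing k i j| * γ i j = |crossing k i j * γ i j| := fun i j => by
    rw [abs_mul, abs_of_nonneg (hγ.nonneg i j)]
  rw [← hγ.sum_crossing_mul]
  simp only [habs]
  refine (sum_sum_abs_eq_abs_sum_sum ?_).symm
  by_contra! ⟨⟨i, j, hneg⟩, ⟨i', j', hpos⟩⟩
  have hc : crossing k i j < 0 := neg_of_mul_neg_left hneg (hγ.nonneg i j)
  have hc' : 0 < crossing k i' j' := pos_of_mul_pos_left hpos (hγ.nonneg i' j')
  obtain ⟨hjk, hki⟩ := crossing_neg_iff.mp hc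
  obtain ⟨hi'k, hkj'⟩ := crossing_pos_iff.mp hc'
  have hj'j : j' ≤ j := hmono (pos_of_mul_pos_right hpos hc'.le)
    (pos_of_mul_neg_right hneg hc.le) (hi'k.trans_lt hki)
  exact (hkj'.trans_le hj'j).not_ge hjk

lemma sum_abs_sum_Iic_sub_le_cost (hγ : IsCoupling u v γ) :
    ∑ k, |∑ i ∈ Iic k, u i - ∑ i ∈ Iic k, v i| ≤
      ∑ i : Fin n, ∑ j : Fin n, |(i : ℝ) - (j : ℝ)| * γ i j := by
  rw [sum_abs_sub_mul_eq_sum_crossing]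
  exact sum_le_sum fun k _ => hγ.abs_sum_Iic_sub_le k

lemma cost_eq_sum_abs_sum_Iic_sub (hγ : IsCoupling u v γ) (hmono : HasMonotoneSupport γ) :
    ∑ i : Fin n, ∑ j : Fin n, |(i : ℝ) - (j : ℝ)| * γ i j =
      ∑ k, |∑ i ∈ Iic k, u i - ∑ i ∈ Iic k, v i| := by
  rw [sum_abs_sub_mul_eq_sum_crossing]
  exact sum_congr rfl fun k _ => (hγ.abs_sum_Iic_sub_eq hmono k).symm

end IsCoupling

def intervalOverlap (a b c d : ℝ) : ℝ := max 0 (min b d - max a c)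

section IntervalOverlap

variable {a b c d : ℝ}

lemma intervalOverlap_comm : intervalOverlap a b c d = intervalOverlap c d a b := by
  rw [intervalOverlap, intervalOverlap, min_comm, max_comm a]

lemma lt_and_lt_of_intervalOverlap_pos (h : 0 < intervalOverlap a b c d) : a < d ∧ c < b := by
  simp only [intervalOverlap, lt_max_iff, lt_irrefl, false_or, sub_pos, lt_min_iff,
    max_lt_iff] at h
  exact ⟨h.2.1, h.1.2⟩

lemma intervalOverlap_eq_sub (hab : a ≤ b) (hcd : c ≤ d) :
    intervalOverlap a b c d = max a (min b d) - max a (min b c) := by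
  unfold intervalOverlap
  rcases le_total a c with h1 | h1 <;> rcases le_total b d with h2 | h2 <;>
    simp only [min_def, max_def] <;> split_ifs <;> linarith

lemma sum_range_intervalOverlap {x : ℕ → ℝ} (hx : Monotone x) {m : ℕ} (hab : a ≤ b)
    (h0 : x 0 ≤ a) (hm : b ≤ x m) :
    ∑ j ∈ range m, intervalOverlap a b (x j) (x (j + 1)) = b - a := by
  rw [sum_congr rfl fun j _ => intervalOverlap_eq_sub hab (hx j.le_succ),
    sum_range_sub (fun j => max a (min b (x j))), min_eq_left hm, max_eq_right hab,
    min_eq_right (h0.trans hab), max_eq_left h0]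

end IntervalOverlap

section ComonotoneCoupling

variable {n : ℕ} {u v : Fin n → ℝ}

def cumsum (u : Fin n → ℝ) (m : ℕ) : ℝ := ∑ j : Fin n with j.val < m, u j

lemma cumsum_zero : cumsum u 0 = 0 := by simp [cumsum]

lemma cumsum_of_le {m : ℕ} (h : n ≤ m) : cumsum u m = ∑ j, u j :=
  sum_congr (filter_true_of_mem fun j _ => j.isLt.trans_le h) fun _ _ => rfl

lemma cumsum_succ (i : Fin n) : cumsum u (i + 1 : ℕ) = cumsum u i + u i := by
  have : univ.filter (fun j : Fin n => j.val < i.val + 1) =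
      insert i (univ.filter fun j : Fin n => j.val < i.val) := by
    ext j; simp [Fin.ext_iff]; omega
  unfold cumsum
  rw [this, sum_insert (by simp), add_comm]

lemma monotone_cumsum (hu : ∀ i, 0 ≤ u i) : Monotone (cumsum u) := fun _ _ h =>
  sum_le_sum_of_subset_of_nonneg (monotone_filter_right _ fun _ _ hj => hj.trans_le h)
    fun i _ _ => hu i

def comonotoneCoupling (u v : Fin n → ℝ) (i j : Fin n) : ℝ :=
  intervalOverlap (cumsum u i) (cumsum u (i + 1 : ℕ)) (cumsum v j) (cumsum v (j + 1 : ℕ))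

lemma comonotoneCoupling_comm (i j : Fin n) :
    comonotoneCoupling u v i j = comonotoneCoupling v u j i :=
  intervalOverlap_comm

lemma sum_comonotoneCoupling_row (hu : ∀ i, 0 ≤ u i) (hv : ∀ i, 0 ≤ v i)
    (huv : ∑ i, u i = ∑ i, v i) (i : Fin n) : ∑ j, comonotoneCoupling u v i j = u i := by
  have hle : cumsum u (i + 1 : ℕ) ≤ cumsum v n := by
    rw [cumsum_of_le le_rfl, ← huv, ← cumsum_of_le le_rfl]
    exact monotone_cumsum hu i.isLt
  have h0 : cumsum v 0 ≤ cumsum u i := by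
    rw [cumsum_zero, ← cumsum_zero (u := u)]
    exact monotone_cumsum hu (Nat.zero_le _)
  simp only [comonotoneCoupling]
  rw [Fin.sum_univ_eq_sum_range (fun j => intervalOverlap _ _ (cumsum v j) (cumsum v (j + 1))),
    sum_range_intervalOverlap (monotone_cumsum hv) (monotone_cumsum hu i.val.le_succ) h0 hle,
    cumsum_succ, add_sub_cancel_left]

lemma isCoupling_comonotoneCoupling (hu : ∀ i, 0 ≤ u i) (hv : ∀ i, 0 ≤ v i)
    (huv : ∑ i, u i = ∑ i, v i) : IsCoupling u v (comonotoneCoupling u v) where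
  nonneg _ _ := le_max_left _ _
  sum_row := sum_comonotoneCoupling_row hu hv huv
  sum_col j := by
    simp only [comonotoneCoupling_comm (u := u)]
    exact sum_comonotoneCoupling_row hv hu huv.symm j

lemma hasMonotoneSupport_comonotoneCoupling (hu : ∀ i, 0 ≤ u i) (hv : ∀ i, 0 ≤ v i) :
    HasMonotoneSupport (comonotoneCoupling u v) := by
  intro i i' j j' hij hij' hi
  by_contra! hj
  have h₁ := (lt_and_lt_of_intervalOverlap_pos hij).2
  have h₂ := (lt_and_lt_of_intervalOverlap_pos hij').1
  have h₃ := monotone_cumsum hu (show (i : ℕ) + 1 ≤ i' from hi)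
  have h₄ := monotone_cumsum hv (show (j' : ℕ) + 1 ≤ j from hj)
  linarith

end ComonotoneCoupling

/-- The 1-Wasserstein distance between two discrete probability distributions on
`{1,...,n}` with ground metric `|i-j|`, defined as the infimum of coupling costs,
equals the sum of absolute differences of cumulative sums. -/
theorem wasserstein_eq_cumsum (n : ℕ) (u v : Fin n → ℝ)
    (hu : ∀ i, 0 ≤ u i) (hv : ∀ i, 0 ≤ v i)
    (hus : ∑ i, u i = 1) (hvs : ∑ i, v i = 1) :
    sInf {c : ℝ | ∃ γ : Fin n → Fin n → ℝ,
        (∀ i j, 0 ≤ γ i j) ∧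
        (∀ i : Fin n, ∑ j : Fin n, γ i j = u i) ∧
        (∀ j : Fin n, ∑ i : Fin n, γ i j = v j) ∧
        c = ∑ i : Fin n, ∑ j : Fin n, |(i : ℝ) - (j : ℝ)| * γ i j} =
      ∑ i, |(∑ j ∈ Finset.Iic i, u j) - ∑ j ∈ Finset.Iic i, v j| := by
  have hγ := isCoupling_comonotoneCoupling hu hv (hus.trans hvs.symm)
  refine IsLeast.csInf_eq ⟨⟨_, hγ.nonneg, hγ.sum_row, hγ.sum_col,
    (hγ.cost_eq_sum_abs_sum_Iic_sub (hasMonotoneSupport_comonotoneCoupling hu hv)).symm⟩, ?_⟩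
  rintro c ⟨γ, hnonneg, hrow, hcol, rfl⟩
  exact IsCoupling.sum_abs_sum_Iic_sub_le_cost ⟨hnonneg, hrow, hcol⟩
end

section
/- Let u be a discrete signal of length n and let v be obtained from u by moving mass m ≥ 0 from position i to position k (i.e., v_i = u_i − m, v_k = u_k + m, v_j = u_j otherwise). Then the cumulative-sum Wasserstein distance satisfies d_W(u, v) = m · |k − i|. -/
/-! The prefix sums of `u` and of the moved signal differ by `m` exactly at the positions `p` with
`min i k ≤ p < max i k` and agree elsewhere, so the distance counts `|k - i|` positions of weight `m`. -/

open Finset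

theorem sum_Iic_sub_sum_Iic_add_ite_sub_ite {ι M : Type*} [Preorder ι] [LocallyFiniteOrderBot ι]
    [DecidableEq ι] [DecidableLE ι] [AddCommGroup M] (u : ι → M) (i k p : ι) (m : M) :
    (∑ j ∈ Iic p, u j) -
        ∑ j ∈ Iic p, (u j + (if j = k then m else 0) - (if j = i then m else 0)) =
      (if i ≤ p then m else 0) - (if k ≤ p then m else 0) := by
  rw [sum_sub_distrib, sum_add_distrib, sum_ite_eq' (Iic p) k, sum_ite_eq' (Iic p) i]
  simp only [mem_Iic]
  abel

theorem abs_ite_le_sub_ite_le {ι : Type*} [LinearOrder ι] [LocallyFiniteOrder ι]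
    (a b p : ι) (m : ℝ) :
    |(if a ≤ p then m else 0) - (if b ≤ p then m else 0)| =
      if p ∈ Ico (a ⊓ b) (a ⊔ b) then |m| else 0 := by
  simp only [mem_Ico, inf_le_iff, lt_sup_iff]
  split_ifs <;> grind

theorem Nat.cast_max_sub_min (a b : ℕ) : ((max a b - min a b : ℕ) : ℝ) = |(a : ℝ) - b| := by
  rcases le_total a b with h | h <;> simp [h, abs_of_nonpos, abs_of_nonneg]

/-- Moving mass `m ≥ 0` from position `i` to position `k` incurs cumulative-sum
Wasserstein cost exactly `m · |k − i|`. -/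
theorem cumsum_dist_move_mass (n : ℕ) (u : Fin n → ℝ) (i k : Fin n) (m : ℝ)
    (hm : 0 ≤ m) :
    ∑ p, |(∑ j ∈ Finset.Iic p, u j) -
        ∑ j ∈ Finset.Iic p,
          (u j + (if j = k then m else 0) - (if j = i then m else 0))| =
      m * |(k : ℝ) - (i : ℝ)| := by
  simp_rw [sum_Iic_sub_sum_Iic_add_ite_sub_ite, abs_ite_le_sub_ite_le]
  rw [sum_ite_mem, univ_inter, sum_const, Fin.card_Ico, Fin.coe_max, Fin.coe_min, nsmul_eq_mul,
    Nat.cast_max_sub_min, abs_of_nonneg hm, abs_sub_comm, mul_comm]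
end

section
/- For a one-dimensional Laplace distribution with scale σ, the smoothed classifier obtained by averaging an indicator function h : ℝ → [0,1] over Laplace(t, σ) noise, g(t) = E_{δ~Laplace(0,σ)}[h(t+δ)], satisfies the multiplicative Lipschitz property: for all t, t' ∈ ℝ, g(t') ≥ e^{−|t−t'|/σ} g(t). -/
/-!
Substituting `δ = u + (t - t')` writes `g t'` as the average of `h (t + u)` against the shifted
density `p (u + (t - t'))`, and the triangle inequality `|u + c| ≤ |u| + |c|` gives the pointwise
bound `p (u + c) ≥ e^{-|c|/σ} p u`; integrating it against `h (t + ·) ≥ 0` is the claim.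
-/

open MeasureTheory Filter Set

theorem mul_integral_le_integral_of_kernel_shift {G : Type*} [MeasurableSpace G]
    [AddCommGroup G] [MeasurableAdd G] {μ : Measure G} [μ.IsAddRightInvariant] {f k : G → ℝ}
    {r : ℝ} {t t' : G}
    (hf : ∀ x, 0 ≤ f x) (hk : ∀ u, r * k u ≤ k (u + (t - t')))
    (hint : ∀ s, Integrable (fun u => f (s + u) * k u) μ) :
    r * ∫ u, f (t + u) * k u ∂μ ≤ ∫ u, f (t' + u) * k u ∂μ := by
  have hshift : ∀ u, t' + (u + (t - t')) = t + u := fun u => by abel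
  rw [← integral_add_right_eq_self (fun u => f (t' + u) * k u) (t - t'), ← integral_const_mul]
  refine integral_mono ((hint t).const_mul r) ((hint t').comp_add_right (t - t')) fun u => ?_
  calc r * (f (t + u) * k u) = f (t + u) * (r * k u) := by ring
    _ ≤ f (t + u) * k (u + (t - t')) := mul_le_mul_of_nonneg_left (hk u) (hf _)
    _ = f (t' + (u + (t - t'))) * k (u + (t - t')) := by rw [hshift]

theorem integrable_exp_neg_abs_div {σ : ℝ} (hσ : 0 < σ) :
    Integrable (fun x : ℝ => Real.exp (-|x| / σ)) := by
  refine (by fun_prop : Continuous fun x : ℝ => Real.exp (-|x| / σ)).locallyIntegrable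
    |>.integrable_of_isBigO_atTop_of_norm_isNegInvariant (g := fun x => Real.exp (-σ⁻¹ * x))
    (Eventually.of_forall fun x => by simp only [Function.comp, abs_neg]) ?_
    ⟨Ioi 0, Ioi_mem_atTop 0, exp_neg_integrableOn_Ioi 0 (inv_pos.2 hσ)⟩
  refine EventuallyEq.isBigO ?_
  filter_upwards [eventually_ge_atTop 0] with x hx
  rw [abs_of_nonneg hx, neg_div, div_eq_inv_mul, neg_mul]

theorem exp_neg_abs_div_mul_le {σ : ℝ} (hσ : 0 ≤ σ) (u c : ℝ) :
    Real.exp (-|c| / σ) * Real.exp (-|u| / σ) ≤ Real.exp (-|u + c| / σ) := by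
  rw [← Real.exp_add, Real.exp_le_exp, ← add_div]
  exact div_le_div_of_nonneg_right (by linarith [abs_add_le u c]) hσ

theorem integrable_comp_const_add_mul_of_norm_le {G : Type*} [MeasurableSpace G] [Add G]
    [MeasurableAdd G] {μ : Measure G} {f k : G → ℝ} {C : ℝ} (hk : Integrable k μ)
    (hf : Measurable f) (hbound : ∀ x, ‖f x‖ ≤ C) (s : G) :
    Integrable (fun u => f (s + u) * k u) μ :=
  hk.bdd_mul (hf.comp (measurable_const_add s)).aestronglyMeasurable
    (Eventually.of_forall fun u => hbound (s + u))

/-- Laplace smoothing of a `[0,1]`-valued function yields a multiplicatively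
Lipschitz function: `g(t') ≥ e^{−|t−t'|/σ} g(t)`. -/
theorem laplace_smoothing_multiplicative_lipschitz (σ : ℝ) (hσ : 0 < σ)
    (h : ℝ → ℝ) (hmeas : Measurable h) (hrange : ∀ x, 0 ≤ h x ∧ h x ≤ 1)
    (t t' : ℝ) :
    (∫ δ : ℝ, h (t' + δ) * (1 / (2 * σ) * Real.exp (-|δ| / σ))) ≥
      Real.exp (-|t - t'| / σ) *
        ∫ δ : ℝ, h (t + δ) * (1 / (2 * σ) * Real.exp (-|δ| / σ)) := by
  have hbound : ∀ x, ‖h x‖ ≤ 1 := fun x => by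
    rw [Real.norm_of_nonneg (hrange x).1]; exact (hrange x).2
  refine mul_integral_le_integral_of_kernel_shift (fun x => (hrange x).1) (fun u => ?_)
    (integrable_comp_const_add_mul_of_norm_le
      ((integrable_exp_neg_abs_div hσ).const_mul _) hmeas hbound)
  calc Real.exp (-|t - t'| / σ) * (1 / (2 * σ) * Real.exp (-|u| / σ))
      = 1 / (2 * σ) * (Real.exp (-|t - t'| / σ) * Real.exp (-|u| / σ)) := by ring
    _ ≤ 1 / (2 * σ) * Real.exp (-|u + (t - t')| / σ) :=
      mul_le_mul_of_nonneg_left (exp_neg_abs_div_mul_le hσ.le u _) (by positivity)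
end
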